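/- For any cap K with rotation angle ω ∈ (0, π/2], the upper boundary δK := ⋃_{t∈[0, ω+π/2]} e_K(t) is a connected subset of ℝ². -/

import Mathlib

noncomputable section

open Real MeasureTheory Set Filter Topology

abbrev Pt := EuclideanSpace ℝ (Fin 2)

def mk2 (x y : ℝ) : Pt := (WithLp.equiv 2 (Fin 2 → ℝ)).symm ![x, y]

def dotp (p q : Pt) : ℝ := p 0 * q 0 + p 1 * q 1

def uvec (t : ℝ) : Pt := mk2 (Real.cos t) (Real.sin t)

def vvec (t : ℝ) : Pt := mk2 (-Real.sin t) (Real.cos t)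

def suppFn (K : Set Pt) (t : ℝ) : ℝ := sSup ((fun p => dotp p (uvec t)) '' K)

def suppLine (K : Set Pt) (t : ℝ) : Set Pt := {p | dotp p (uvec t) = suppFn K t}

def edge (K : Set Pt) (t : ℝ) : Set Pt := K ∩ suppLine K t

def vplus (K : Set Pt) (t : ℝ) : Pt :=
  suppFn K t • uvec t + sSup ((fun p => dotp p (vvec t)) '' edge K t) • vvec t

def vminus (K : Set Pt) (t : ℝ) : Pt :=
  suppFn K t • uvec t + sInf ((fun p => dotp p (vvec t)) '' edge K t) • vvec t

def vinter (K : Set Pt) (a b : ℝ) : Pt :=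
  mk2 ((suppFn K a * Real.sin b - suppFn K b * Real.sin a) / Real.sin (b - a))
      ((suppFn K b * Real.cos a - suppFn K a * Real.cos b) / Real.sin (b - a))

def IsConvexBody (K : Set Pt) : Prop := K.Nonempty ∧ IsCompact K ∧ Convex ℝ K

def Jset (ω : ℝ) : Set ℝ := Icc 0 ω ∪ Icc (π/2) (ω + π/2)

def IsCap (ω : ℝ) (K : Set Pt) : Prop :=
  IsConvexBody K ∧
  suppFn K ω = 1 ∧ suppFn K (π/2) = 1 ∧
  suppFn K (ω + π) = 0 ∧ suppFn K (3*π/2) = 0 ∧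
  K = ⋂ t ∈ Jset ω ∪ {ω + π, 3*π/2}, {p : Pt | dotp p (uvec t) ≤ suppFn K t}

def polyAngles (ω : ℝ) (Θ : Finset ℝ) : Set ℝ :=
  ↑Θ ∪ (fun s => s + π/2) '' ↑Θ ∪ {ω, π/2, ω + π, 3*π/2}

def IsPolyCap (ω : ℝ) (Θ : Finset ℝ) (K : Set Pt) : Prop :=
  IsCap ω K ∧ K = ⋂ t ∈ polyAngles ω Θ, {p : Pt | dotp p (uvec t) ≤ suppFn K t}

def Qminus (K : Set Pt) (t : ℝ) : Set Pt :=
  {p | dotp p (uvec t) < suppFn K t - 1 ∧ dotp p (uvec (t + π/2)) < suppFn K (t + π/2) - 1}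

def Qplus (K : Set Pt) (t : ℝ) : Set Pt :=
  {p | dotp p (uvec t) ≤ suppFn K t ∧ dotp p (uvec (t + π/2)) ≤ suppFn K (t + π/2)}

def hallway (S : Set Pt) (t : ℝ) : Set Pt := Qplus S t \ Qminus S t

def fan (ω : ℝ) : Set Pt := {p | 0 ≤ dotp p (uvec ω) ∧ 0 ≤ dotp p (uvec (π/2))}

def parall (ω : ℝ) : Set Pt :=
  {p | dotp p (uvec (π/2)) ∈ Icc (0:ℝ) 1 ∧ dotp p (uvec ω) ∈ Icc (0:ℝ) 1}

def innerCorner (K : Set Pt) (t : ℝ) : Pt :=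
  (suppFn K t - 1) • uvec t + (suppFn K (t + π/2) - 1) • vvec t

def outerCorner (K : Set Pt) (t : ℝ) : Pt :=
  suppFn K t • uvec t + suppFn K (t + π/2) • vvec t

def wedge (ω : ℝ) (K : Set Pt) (t : ℝ) : Set Pt := fan ω ∩ Qminus K t

def niche (ω : ℝ) (K : Set Pt) : Set Pt := fan ω ∩ ⋃ t ∈ Ioo 0 ω, Qminus K t

def polyNiche (ω : ℝ) (Θ : Finset ℝ) (K : Set Pt) : Set Pt :=
  parall ω ∩ ⋃ t ∈ Θ, Qminus K t

def upperBoundary (ω : ℝ) (K : Set Pt) : Set Pt := ⋃ t ∈ Icc 0 (ω + π/2), edge K t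

def area (X : Set Pt) : ℝ := (volume X).toReal

def Wpt (K : Set Pt) (t : ℝ) : Pt := mk2 ((suppFn K t - 1) / Real.cos t) 0

def Zpt (ω : ℝ) (K : Set Pt) (t : ℝ) : Pt :=
  ((suppFn K (t + π/2) - 1) / Real.sin (t + π/2 - ω)) • vvec ω

def wgap (K : Set Pt) (t : ℝ) : ℝ := dotp (vminus K 0 - Wpt K t) (uvec 0)

def zgap (ω : ℝ) (K : Set Pt) (t : ℝ) : ℝ := dotp (vplus K (ω + π/2) - Zpt ω K t) (vvec ω)

def wgapInf (ω : ℝ) (K : Set Pt) : ℝ := sInf (wgap K '' Ioo 0 ω)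

def zgapInf (ω : ℝ) (K : Set Pt) : ℝ := sInf (zgap ω K '' Ioo 0 ω)

def fplus (K : Set Pt) (t : ℝ) : ℝ := dotp (outerCorner K t - vplus K t) (vvec t)
def fminus (K : Set Pt) (t : ℝ) : ℝ := dotp (outerCorner K t - vminus K t) (vvec t)
def gplus (K : Set Pt) (t : ℝ) : ℝ := dotp (outerCorner K t - vplus K (t + π/2)) (uvec t)
def gminus (K : Set Pt) (t : ℝ) : ℝ := dotp (outerCorner K t - vminus K (t + π/2)) (uvec t)

def oPt (ω : ℝ) : Pt := mk2 (Real.tan (π/4 - ω/2)) 1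

def hplane (c : Bool) (t h : ℝ) : Set Pt :=
  if c then {p | dotp p (uvec t) ≤ h} else {p | dotp p (uvec t) < h}

section Aux

lemma dotp_eq_inner (p q : Pt) : dotp p q = inner ℝ p q := by
  simp [dotp, PiLp.inner_apply, RCLike.inner_apply, Fin.sum_univ_two, mul_comm]

lemma continuous_dotp_right (q : Pt) : Continuous fun p : Pt => dotp p q := by
  simp only [dotp_eq_inner]
  exact continuous_id.inner continuous_const

lemma continuous_uvec : Continuous uvec := by
  have h : Continuous fun t : ℝ => (![Real.cos t, Real.sin t] : Fin 2 → ℝ) := by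
    apply continuous_pi
    intro i
    fin_cases i
    · simpa using Real.continuous_cos
    · simpa using Real.continuous_sin
  exact (PiLp.continuous_toLp 2 (fun _ : Fin 2 => ℝ)).comp h

variable {K : Set Pt}

lemma bddAbove_dotp_image (hc : IsCompact K) (t : ℝ) :
    BddAbove ((fun p => dotp p (uvec t)) '' K) :=
  (hc.image (continuous_dotp_right (uvec t))).bddAbove

lemma dotp_le_suppFn (hc : IsCompact K) {p : Pt} (hp : p ∈ K) (t : ℝ) :
    dotp p (uvec t) ≤ suppFn K t :=
  le_csSup (bddAbove_dotp_image hc t) (Set.mem_image_of_mem _ hp)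

lemma edge_nonempty (hc : IsCompact K) (hne : K.Nonempty) (t : ℝ) :
    (edge K t).Nonempty := by
  obtain ⟨x, hxK, hx⟩ := hc.exists_isMaxOn hne (continuous_dotp_right (uvec t)).continuousOn
  refine ⟨x, hxK, ?_⟩
  have : IsGreatest ((fun p => dotp p (uvec t)) '' K) (dotp x (uvec t)) :=
    ⟨Set.mem_image_of_mem _ hxK, by rintro y ⟨p, hp, rfl⟩; exact hx hp⟩
  exact (this.csSup_eq).symm

lemma edge_convex (hconv : Convex ℝ K) (t : ℝ) : Convex ℝ (edge K t) := by
  apply hconv.inter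
  intro p hp q hq a b ha hb hab
  have hp' : dotp p (uvec t) = suppFn K t := hp
  have hq' : dotp q (uvec t) = suppFn K t := hq
  show dotp (a • p + b • q) (uvec t) = suppFn K t
  simp only [dotp, PiLp.add_apply, PiLp.smul_apply, smul_eq_mul] at *
  linear_combination a * hp' + b * hq' + suppFn K t * hab

lemma suppFn_continuous (hc : IsCompact K) (hne : K.Nonempty) :
    Continuous (suppFn K) := by
  obtain ⟨R, hR⟩ := hc.isBounded.exists_norm_le
  have key : ∀ s t : ℝ, suppFn K t ≤ suppFn K s + R * ‖uvec t - uvec s‖ := by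
    intro s t
    apply csSup_le (hne.image _)
    rintro x ⟨p, hp, rfl⟩
    have h1 : dotp p (uvec t) = dotp p (uvec s) + inner ℝ p (uvec t - uvec s) := by
      simp only [dotp_eq_inner, inner_sub_right]; ring
    have h2 : (inner ℝ p (uvec t - uvec s) : ℝ) ≤ R * ‖uvec t - uvec s‖ := by
      calc (inner ℝ p (uvec t - uvec s) : ℝ) ≤ ‖p‖ * ‖uvec t - uvec s‖ :=
            real_inner_le_norm _ _
        _ ≤ R * ‖uvec t - uvec s‖ :=
            mul_le_mul_of_nonneg_right (hR p hp) (norm_nonneg _)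
    have h3 : dotp p (uvec s) ≤ suppFn K s := dotp_le_suppFn hc hp s
    linarith
  have habs : ∀ s t : ℝ, |suppFn K t - suppFn K s| ≤ R * ‖uvec t - uvec s‖ := by
    intro s t
    rw [abs_sub_le_iff]
    constructor
    · linarith [key s t]
    · have := key t s
      rw [norm_sub_rev (uvec s)] at this
      linarith
  rw [continuous_iff_continuousAt]
  intro t₀
  rw [ContinuousAt, ← tendsto_sub_nhds_zero_iff]
  have hg : Filter.Tendsto (fun t => R * ‖uvec t - uvec t₀‖) (nhds t₀) (nhds 0) := by
    have : Filter.Tendsto (fun t => ‖uvec t - uvec t₀‖) (nhds t₀) (nhds 0) := by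
      have h := ((continuous_uvec.tendsto t₀).sub (tendsto_const_nhds (x := uvec t₀))).norm
      simpa using h
    simpa using this.const_mul R
  exact squeeze_zero_norm (fun t => habs t₀ t) hg

end Aux

theorem stmt_6 (ω : ℝ) (hω : ω ∈ Ioc 0 (π/2)) (K : Set Pt) (hK : IsCap ω K) :
    IsConnected (upperBoundary ω K) := by
  obtain ⟨⟨hne, hcomp, hconv⟩, -⟩ := hK
  have hI0 : (0:ℝ) ∈ Icc 0 (ω + π/2) := ⟨le_refl 0, by linarith [hω.1, Real.pi_pos]⟩
  have hedge_ne : ∀ t, (edge K t).Nonempty := edge_nonempty hcomp hne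
  have hedge_pc : ∀ t, IsPreconnected (edge K t) := fun t =>
    (edge_convex hconv t).isPreconnected
  have hcontS : Continuous (suppFn K) := suppFn_continuous hcomp hne
  set S := upperBoundary ω K with hSdef
  have hedgeS : ∀ t ∈ Icc 0 (ω + π/2), edge K t ⊆ S := fun t ht =>
    Set.subset_biUnion_of_mem ht
  constructor
  · obtain ⟨p, hp⟩ := hedge_ne 0
    exact ⟨p, hedgeS 0 hI0 hp⟩
  · intro U V hU hV hSUV hSU hSV
    by_contra hcon
    rw [Set.not_nonempty_iff_eq_empty] at hcon
    have hconV : S ∩ (V ∩ U) = ∅ := by rw [Set.inter_comm V U]; exact hcon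
    have dich : ∀ t ∈ Icc 0 (ω + π/2), edge K t ⊆ U ∨ edge K t ⊆ V := by
      intro t ht
      by_contra h
      push_neg at h
      obtain ⟨h1, h2⟩ := h
      obtain ⟨p, hp, hpU⟩ := Set.not_subset.mp h1
      obtain ⟨q, hq, hqV⟩ := Set.not_subset.mp h2
      have hpV : p ∈ V := (hSUV (hedgeS t ht hp)).resolve_left hpU
      have hqU : q ∈ U := (hSUV (hedgeS t ht hq)).resolve_right hqV
      obtain ⟨x, hxe, hxUV⟩ := hedge_pc t U V hU hV ((hedgeS t ht).trans hSUV)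
        ⟨q, hq, hqU⟩ ⟨p, hp, hpV⟩
      exact absurd hcon (Set.nonempty_iff_ne_empty.mp ⟨x, hedgeS t ht hxe, hxUV⟩)
    have hAclosed : ∀ W W' : Set Pt, IsOpen W' →
        (∀ t ∈ Icc 0 (ω + π/2), edge K t ⊆ W ∨ edge K t ⊆ W') →
        S ∩ (W ∩ W') = ∅ →
        IsClosed {t | t ∈ Icc 0 (ω + π/2) ∧ edge K t ⊆ W} := by
      intro W W' hW' hd hemp
      apply IsSeqClosed.isClosed
      intro ts t hts hlim
      have htI : t ∈ Icc 0 (ω + π/2) :=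
        isClosed_Icc.isSeqClosed (fun n => (hts n).1) hlim
      refine ⟨htI, ?_⟩
      rcases hd t htI with h | h
      · exact h
      · exfalso
        choose ps hps using fun n => hedge_ne (ts n)
        obtain ⟨p, hpK, φ, hφ, hlimp⟩ := hcomp.tendsto_subseq (fun n => (hps n).1)
        have hts' : Filter.Tendsto (fun n => ts (φ n)) Filter.atTop (nhds t) :=
          hlim.comp hφ.tendsto_atTop
        have h1 : Filter.Tendsto (fun n => dotp (ps (φ n)) (uvec (ts (φ n))))
            Filter.atTop (nhds (dotp p (uvec t))) := by
          simp only [dotp_eq_inner]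
          exact hlimp.inner ((continuous_uvec.tendsto t).comp hts')
        have h2 : ∀ n, dotp (ps (φ n)) (uvec (ts (φ n))) = suppFn K (ts (φ n)) :=
          fun n => (hps (φ n)).2
        have h3 : Filter.Tendsto (fun n => suppFn K (ts (φ n))) Filter.atTop
            (nhds (suppFn K t)) := (hcontS.tendsto t).comp hts'
        have heq : dotp p (uvec t) = suppFn K t := by
          apply tendsto_nhds_unique h1
          simpa only [h2] using h3
        have hpe : p ∈ edge K t := ⟨hpK, heq⟩
        have hpW' : p ∈ W' := h hpe
        have hev : ∀ᶠ n in Filter.atTop, ps (φ n) ∈ W' :=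
          hlimp.eventually_mem (hW'.mem_nhds hpW')
        obtain ⟨n, hn⟩ := hev.exists
        have hmem : ps (φ n) ∈ S ∩ (W ∩ W') :=
          ⟨hedgeS _ (hts (φ n)).1 (hps (φ n)), (hts (φ n)).2 (hps (φ n)), hn⟩
        rw [hemp] at hmem
        exact hmem
    set A := {t | t ∈ Icc 0 (ω + π/2) ∧ edge K t ⊆ U} with hAdef
    set B := {t | t ∈ Icc 0 (ω + π/2) ∧ edge K t ⊆ V} with hBdef
    have hAc : IsClosed A := hAclosed U V hV dich hcon
    have hBc : IsClosed B := hAclosed V U hU (fun t ht => (dich t ht).symm) hconV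
    have hcover : Icc 0 (ω + π/2) ⊆ A ∪ B := by
      intro t ht
      rcases dich t ht with h | h
      · exact Or.inl ⟨ht, h⟩
      · exact Or.inr ⟨ht, h⟩
    have hmemA : ∀ p ∈ S ∩ U, ∃ t ∈ Icc 0 (ω + π/2), t ∈ A := by
      rintro p ⟨hpS, hpU⟩
      obtain ⟨t, ht, hpe⟩ := Set.mem_iUnion₂.mp hpS
      refine ⟨t, ht, ht, ?_⟩
      rcases dich t ht with h | h
      · exact h
      · exact absurd hcon (Set.nonempty_iff_ne_empty.mp ⟨p, hpS, hpU, h hpe⟩)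
    have hmemB : ∀ p ∈ S ∩ V, ∃ t ∈ Icc 0 (ω + π/2), t ∈ B := by
      rintro p ⟨hpS, hpV⟩
      obtain ⟨t, ht, hpe⟩ := Set.mem_iUnion₂.mp hpS
      refine ⟨t, ht, ht, ?_⟩
      rcases dich t ht with h | h
      · exact absurd hcon (Set.nonempty_iff_ne_empty.mp ⟨p, hpS, h hpe, hpV⟩)
      · exact h
    obtain ⟨pU, hpU⟩ := hSU
    obtain ⟨pV, hpV⟩ := hSV
    obtain ⟨tA, htAI, htA⟩ := hmemA pU hpU
    obtain ⟨tB, htBI, htB⟩ := hmemB pV hpV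
    obtain ⟨t, htI, htU, htV⟩ := isPreconnected_closed_iff.mp isPreconnected_Icc
      A B hAc hBc hcover ⟨tA, htAI, htA⟩ ⟨tB, htBI, htB⟩
    obtain ⟨x, hxe⟩ := hedge_ne t
    exact absurd hcon (Set.nonempty_iff_ne_empty.mp
      ⟨x, hedgeS t htI hxe, htU.2 hxe, htV.2 hxe⟩)
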